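/- Let N ≥ 2 and let G be the path graph on vertex set {0,…,N−1}, in which vertex m is adjacent to vertex m+1 for 0 ≤ m ≤ N−2 and there are no other edges, with Laplacian matrix L. Let M be a pseudoinverse of L (M symmetric, M·𝟙 = 0, and L·M = I − (1/N)·J). Then for all vertices j, k with k < j, the squared biharmonic distance satisfies d_B²(j,k) = j/6 + j²/2 − j²/(4N) + j³/3 − j³/(2N) − j⁴/(4N) − k/6 − jk + jk/(2N) + j²k/(2N) + k²/2 − k²/(4N) − jk² + jk²/(2N) + j²k²/(2N) + 2k³/3 − k³/(2N) − k⁴/(4N). -/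

import Mathlib

/-!
Since `M` and `L` are symmetric, `M * L = (L * M)ᵀ = I - J / N`, so if `L r = e_j - e_k` then
`M (e_j - e_k) = r - mean r`. On the path, the ramp `r i = clamp (i - k) 0 (j - k)` solves
`L r = e_j - e_k`, and `d_B²(j, k) = ‖M (e_j - e_k)‖² = ∑ r² - (∑ r)² / N` is computed from the
sums of the first `j - k` integers and of their squares.
-/

open Matrix Finset

/-- Squared biharmonic distance between vertices `j` and `k`, in terms of a
pseudoinverse `M` of the graph Laplacian. -/
noncomputable def biharmSq {N : ℕ} (M : Matrix (Fin N) (Fin N) ℝ) (j k : Fin N) : ℝ :=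
  (M * M) j j + (M * M) k k - 2 * (M * M) j k

open SimpleGraph

theorem Matrix.IsSymm.mul_eq_of_mul_eq {n α : Type*} [Fintype n] [CommSemiring α]
    {A B C : Matrix n n α} (hA : A.IsSymm) (hB : B.IsSymm) (hC : C.IsSymm) (h : A * B = C) :
    B * A = C := by
  rw [← hA.eq, ← hB.eq, ← transpose_mul, h, hC.eq]

theorem Matrix.IsSymm.mulVec_mulVec_eq_sub_mean {n : Type*} [Fintype n] [DecidableEq n]
    {L M : Matrix n n ℝ} (hL : L.IsSymm) (hM : M.IsSymm) {c : ℝ}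
    (hLM : L * M = 1 - c • of (fun _ _ => (1 : ℝ))) (x : n → ℝ) :
    M *ᵥ (L *ᵥ x) = fun i => x i - c * ∑ l, x l := by
  have hML : M * L = 1 - c • of (fun _ _ => (1 : ℝ)) :=
    hL.mul_eq_of_mul_eq hM (isSymm_one.sub ((IsSymm.ext fun _ _ => rfl).smul c)) hLM
  rw [mulVec_mulVec, hML, sub_mulVec, one_mulVec, smul_mulVec]
  ext i
  simp [mulVec, dotProduct]

theorem biharmSq_eq_sum_sq {N : ℕ} {M : Matrix (Fin N) (Fin N) ℝ} (hM : M.IsSymm) (j k : Fin N) :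
    biharmSq M j k = ∑ c, (M *ᵥ (Pi.single j 1 - Pi.single k 1)) c ^ 2 := by
  have hMM : (M * M) k j = (M * M) j k := by
    rw [← transpose_apply (M * M), transpose_mul, hM.eq]
  simp only [sq, ← dotProduct.eq_1]
  rw [dotProduct_mulVec, vecMul_mulVec, ← mulVec_transpose, transpose_mul, transpose_transpose,
    hM.eq]
  simp only [biharmSq, mulVec_sub, dotProduct_sub, mulVec_single_one, dotProduct_single_one,
    Pi.sub_apply, col_apply, hMM]
  ring

theorem sum_sub_mean_sq {ι : Type*} [Fintype ι] (x : ι → ℝ) :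
    ∑ i, (x i - (Fintype.card ι : ℝ)⁻¹ * ∑ l, x l) ^ 2
      = ∑ i, x i ^ 2 - (∑ i, x i) ^ 2 / Fintype.card ι := by
  simp only [sub_sq, sum_add_distrib, sum_sub_distrib, ← sum_mul, ← mul_sum, sum_const,
    card_univ, nsmul_eq_mul]
  rcases eq_or_ne (Fintype.card ι : ℝ) 0 with h | h
  · simp [h]
  · field_simp
    ring

/- The formula covers the end vertices too: at `a = 0`, `x (a - 1) = x a` since `0 - 1 = 0`
in `ℕ`, and at `a = N - 1`, `x (a + 1) = x a` by `hx`. -/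
theorem pathGraph_lapMatrix_mulVec_apply {N : ℕ} [DecidableRel (pathGraph N).Adj] (x : ℕ → ℝ)
    (hx : x N = x (N - 1)) (a : Fin N) :
    ((pathGraph N).lapMatrix ℝ *ᵥ fun i => x i) a = 2 * x a - x (a + 1) - x (a - 1) := by
  rw [lapMatrix_mulVec_apply, ← card_neighborFinset_eq_degree, ← nsmul_eq_mul, ← sum_const,
    ← sum_sub_distrib]
  obtain ⟨a, ha⟩ := a
  dsimp only
  by_cases hfirst : a = 0 <;> by_cases hlast : a + 1 = N
  · subst hfirst hlast
    simp [hx]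
    ring
  · subst hfirst
    have hnbr : (pathGraph N).neighborFinset ⟨0, ha⟩ = {⟨1, by omega⟩} := by
      ext b; simp [pathGraph_adj, Fin.ext_iff]; omega
    simp [hnbr]
    ring
  · subst hlast
    have hnbr : (pathGraph (a + 1)).neighborFinset ⟨a, ha⟩ = {⟨a - 1, by omega⟩} := by
      ext b; simp [pathGraph_adj, Fin.ext_iff]; omega
    simp [hnbr, hx]
    ring
  · have hnbr :
        (pathGraph N).neighborFinset ⟨a, ha⟩ = {⟨a + 1, by omega⟩, ⟨a - 1, by omega⟩} := by
      ext b; simp [pathGraph_adj, Fin.ext_iff]; omega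
    rw [hnbr, sum_pair (by simp [Fin.ext_iff]; omega)]
    ring

/-- The potential on the path of a unit current entering at `j` and leaving at `k`. -/
def ramp (k j i : ℕ) : ℕ := min (i - k) (j - k)

theorem ramp_second_difference {k j : ℕ} (hkj : k < j) (a : ℕ) :
    2 * (ramp k j a : ℝ) - ramp k j (a + 1) - ramp k j (a - 1)
      = (if a = j then 1 else 0) - (if a = k then 1 else 0) := by
  have key : 2 * ramp k j a + (if a = k then 1 else 0)
      = ramp k j (a + 1) + ramp k j (a - 1) + (if a = j then 1 else 0) := by
    unfold ramp; split_ifs <;> omega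
  have := congrArg (Nat.cast : ℕ → ℝ) key
  push_cast at this
  linarith

theorem pathGraph_lapMatrix_mulVec_ramp {N : ℕ} [DecidableRel (pathGraph N).Adj] {j k : Fin N}
    (hkj : k < j) :
    (pathGraph N).lapMatrix ℝ *ᵥ (fun i : Fin N => (ramp k j i : ℝ))
      = Pi.single j 1 - Pi.single k 1 := by
  ext a
  rw [pathGraph_lapMatrix_mulVec_apply (fun i => (ramp k j i : ℝ)), ramp_second_difference hkj]
  · simp [Pi.single_apply, Fin.ext_iff]
  · have := j.isLt
    unfold ramp
    congr 1
    omega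

theorem sum_range_ramp {k j N : ℕ} (hkj : k ≤ j) (hjN : j ≤ N) (g : ℕ → ℝ) (hg : g 0 = 0) :
    ∑ i ∈ range N, g (ramp k j i) = ∑ i ∈ range (j - k), g i + (N - j : ℕ) * g (j - k) := by
  obtain ⟨d, rfl⟩ := Nat.exists_eq_add_of_le hkj
  obtain ⟨e, rfl⟩ := Nat.exists_eq_add_of_le hjN
  have below : ∀ i ∈ range k, g (ramp k (k + d) i) = 0 := fun i hi => by
    rw [mem_range] at hi
    rw [← hg]
    congr 1
    unfold ramp
    omega
  have inside : ∀ i ∈ range d, g (ramp k (k + d) (k + i)) = g i := fun i hi => by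
    rw [mem_range] at hi
    congr 1
    unfold ramp
    omega
  have above : ∀ i ∈ range e, g (ramp k (k + d) (k + d + i)) = g d := fun i _ => by
    congr 1
    unfold ramp
    omega
  rw [sum_range_add, sum_range_add, sum_eq_zero below, sum_congr rfl inside, sum_congr rfl above]
  simp

theorem sum_range_natCast (n : ℕ) : ∑ i ∈ range n, (i : ℝ) = ((n : ℝ) ^ 2 - n) / 2 := by
  induction n with
  | zero => simp
  | succ n ih => rw [sum_range_succ, ih]; push_cast; ring

theorem sum_range_natCast_sq (n : ℕ) :
    ∑ i ∈ range n, (i : ℝ) ^ 2 = (2 * (n : ℝ) ^ 3 - 3 * (n : ℝ) ^ 2 + n) / 6 := by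
  induction n with
  | zero => simp
  | succ n ih => rw [sum_range_succ, ih]; push_cast; ring

theorem biharmonic_path_general (N : ℕ)
    (G : SimpleGraph (Fin N)) [DecidableRel G.Adj]
    (hG : ∀ a b : Fin N, G.Adj a b ↔ (a.val + 1 = b.val ∨ b.val + 1 = a.val))
    (L M : Matrix (Fin N) (Fin N) ℝ)
    (hL : L = G.lapMatrix ℝ)
    (hMsymm : M.IsSymm)
    (hLM : L * M = 1 - (N : ℝ)⁻¹ • Matrix.of (fun _ _ => (1 : ℝ))) :
    ∀ j k : Fin N, k < j →
      biharmSq M j k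
        = (j.val : ℝ) / 6 + (j.val : ℝ) ^ 2 / 2 - (j.val : ℝ) ^ 2 / (4 * N)
            + (j.val : ℝ) ^ 3 / 3 - (j.val : ℝ) ^ 3 / (2 * N) - (j.val : ℝ) ^ 4 / (4 * N)
            - (k.val : ℝ) / 6 - (j.val : ℝ) * k.val + (j.val : ℝ) * k.val / (2 * N)
            + (j.val : ℝ) ^ 2 * k.val / (2 * N) + (k.val : ℝ) ^ 2 / 2
            - (k.val : ℝ) ^ 2 / (4 * N) - (j.val : ℝ) * (k.val : ℝ) ^ 2
            + (j.val : ℝ) * (k.val : ℝ) ^ 2 / (2 * N)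
            + (j.val : ℝ) ^ 2 * (k.val : ℝ) ^ 2 / (2 * N) + 2 * (k.val : ℝ) ^ 3 / 3
            - (k.val : ℝ) ^ 3 / (2 * N) - (k.val : ℝ) ^ 4 / (4 * N) := by
  intro j k hkj
  subst hL
  obtain rfl : G = pathGraph N := by ext a b; exact (hG a b).trans pathGraph_adj.symm
  have hMw := (isSymm_lapMatrix ℝ _).mulVec_mulVec_eq_sub_mean hMsymm hLM
    fun i : Fin N => (ramp k j i : ℝ)
  rw [pathGraph_lapMatrix_mulVec_ramp hkj] at hMw
  have hmean := sum_sub_mean_sq fun i : Fin N => (ramp k j i : ℝ)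
  rw [Fintype.card_fin] at hmean
  have hkj' : k.val < j.val := hkj
  have hsum := sum_range_ramp hkj'.le j.isLt.le (fun i => (i : ℝ)) Nat.cast_zero
  have hsum_sq := sum_range_ramp hkj'.le j.isLt.le (fun i => (i : ℝ) ^ 2) (by simp)
  beta_reduce at hsum hsum_sq
  rw [biharmSq_eq_sum_sq hMsymm, hMw, hmean,
    Fin.sum_univ_eq_sum_range (fun i => (ramp k j i : ℝ)),
    Fin.sum_univ_eq_sum_range (fun i => (ramp k j i : ℝ) ^ 2), hsum, hsum_sq, sum_range_natCast,
    sum_range_natCast_sq, Nat.cast_sub hkj'.le, Nat.cast_sub j.isLt.le]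
  have hN : (N : ℝ) ≠ 0 := Nat.cast_ne_zero.mpr (Fin.pos j).ne'
  field_simp
  ring

theorem biharmonic_path (N : ℕ) (hN : 2 ≤ N)
    (G : SimpleGraph (Fin N)) [DecidableRel G.Adj]
    (hG : ∀ a b : Fin N, G.Adj a b ↔ (a.val + 1 = b.val ∨ b.val + 1 = a.val))
    (L M : Matrix (Fin N) (Fin N) ℝ)
    (hL : L = G.lapMatrix ℝ)
    (hMsymm : M.IsSymm)
    (hM1 : M.mulVec (fun _ => (1 : ℝ)) = 0)
    (hLM : L * M = 1 - (N : ℝ)⁻¹ • Matrix.of (fun _ _ => (1 : ℝ))) :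
    ∀ j k : Fin N, k < j →
      biharmSq M j k
        = (j.val : ℝ) / 6 + (j.val : ℝ) ^ 2 / 2 - (j.val : ℝ) ^ 2 / (4 * N)
            + (j.val : ℝ) ^ 3 / 3 - (j.val : ℝ) ^ 3 / (2 * N) - (j.val : ℝ) ^ 4 / (4 * N)
            - (k.val : ℝ) / 6 - (j.val : ℝ) * k.val + (j.val : ℝ) * k.val / (2 * N)
            + (j.val : ℝ) ^ 2 * k.val / (2 * N) + (k.val : ℝ) ^ 2 / 2
            - (k.val : ℝ) ^ 2 / (4 * N) - (j.val : ℝ) * (k.val : ℝ) ^ 2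
            + (j.val : ℝ) * (k.val : ℝ) ^ 2 / (2 * N)
            + (j.val : ℝ) ^ 2 * (k.val : ℝ) ^ 2 / (2 * N) + 2 * (k.val : ℝ) ^ 3 / 3
            - (k.val : ℝ) ^ 3 / (2 * N) - (k.val : ℝ) ^ 4 / (4 * N) :=
  biharmonic_path_general N G hG L M hL hMsymm hLM
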